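/- arXiv:2407.11253 — 5 statements merged into one kernel-verified Lean document; each statement's English description precedes it below -/
import Mathlib

section
/- Sine is a Tauber–Wiener function: for every real interval [a,b] with a < b, every continuous function f : [a,b] → ℝ, and every ε > 0, there exist a positive integer N and real constants c_i, λ_i, θ_i (i = 1,…,N) such that |f(x) − Σ_{i=1}^N c_i sin(λ_i x + θ_i)| < ε for all x ∈ [a,b]. -/
/-!
By the product-to-sum formula, `sin A * sin B = (sin (A - B + π/2) - sin (A + B + π/2)) / 2`, and
`sin (0 * x + π/2) = 1`; hence the linear span of the waves `x ↦ sin (l * x + t)` is a unital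
subalgebra of `C(ℝ, ℝ)`. It separates points: for `x ≠ y` the wave with `l = π / (2 (y - x))` and
`t = -l x` takes the values `0` at `x` and `1` at `y`. The Stone–Weierstrass theorem then
approximates every continuous function uniformly on the compact interval `[a, b]`.
-/

open Real Submodule

noncomputable def sineWave (l t : ℝ) : C(ℝ, ℝ) :=
  ⟨fun x => sin (l * x + t), by fun_prop⟩

@[simp]
lemma sineWave_apply (l t x : ℝ) : sineWave l t x = sin (l * x + t) := rfl

lemma sineWave_mul_sineWave (l₁ t₁ l₂ t₂ : ℝ) :
    sineWave l₁ t₁ * sineWave l₂ t₂ =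
      (1 / 2 : ℝ) • sineWave (l₁ - l₂) (t₁ - t₂ + π / 2)
        - (1 / 2 : ℝ) • sineWave (l₁ + l₂) (t₁ + t₂ + π / 2) := by
  ext x
  have h₁ : (l₁ - l₂) * x + (t₁ - t₂ + π / 2) = (l₁ * x + t₁) - (l₂ * x + t₂) + π / 2 := by ring
  have h₂ : (l₁ + l₂) * x + (t₁ + t₂ + π / 2) = (l₁ * x + t₁) + (l₂ * x + t₂) + π / 2 := by ring
  simp only [ContinuousMap.mul_apply, ContinuousMap.sub_apply, ContinuousMap.smul_apply,
    smul_eq_mul, sineWave_apply, h₁, h₂, sin_add_pi_div_two, cos_sub, cos_add]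
  ring

lemma sineWave_zero_pi_div_two : sineWave 0 (π / 2) = 1 := by
  ext x
  simp

def sineWaves : Set C(ℝ, ℝ) :=
  Set.range fun p : ℝ × ℝ => sineWave p.1 p.2

lemma sineWave_mem_sineWaves (l t : ℝ) : sineWave l t ∈ sineWaves :=
  ⟨(l, t), rfl⟩

lemma mul_mem_span_sineWaves {u v : C(ℝ, ℝ)} (hu : u ∈ span ℝ sineWaves)
    (hv : v ∈ span ℝ sineWaves) : u * v ∈ span ℝ sineWaves := by
  have hmul : span ℝ sineWaves * span ℝ sineWaves ≤ span ℝ sineWaves := by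
    rw [span_mul_span, span_le]
    rintro _ ⟨_, ⟨p, rfl⟩, _, ⟨q, rfl⟩, rfl⟩
    change sineWave p.1 p.2 * sineWave q.1 q.2 ∈ span ℝ sineWaves
    rw [sineWave_mul_sineWave]
    exact sub_mem (smul_mem _ _ (subset_span (sineWave_mem_sineWaves _ _)))
      (smul_mem _ _ (subset_span (sineWave_mem_sineWaves _ _)))
  exact hmul (mul_mem_mul hu hv)

noncomputable def sineSubalgebra : Subalgebra ℝ C(ℝ, ℝ) :=
  (span ℝ sineWaves).toSubalgebra
    (sineWave_zero_pi_div_two ▸ subset_span (sineWave_mem_sineWaves _ _))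
    (fun _ _ => mul_mem_span_sineWaves)

lemma sineSubalgebra_separatesPoints : sineSubalgebra.SeparatesPoints := by
  intro x y hxy
  set l := π / (2 * (y - x))
  have hy : l * y + -(l * x) = π / 2 := by
    have : y - x ≠ 0 := sub_ne_zero.mpr hxy.symm
    simp only [l]
    field_simp
    ring
  refine ⟨_, ⟨sineWave l (-(l * x)), subset_span (sineWave_mem_sineWaves _ _), rfl⟩, ?_⟩
  simp [hy]

lemma exists_sum_sin_of_mem_sineSubalgebra {g : C(ℝ, ℝ)} (hg : g ∈ sineSubalgebra) :
    ∃ N : ℕ, 0 < N ∧ ∃ c l t : Fin N → ℝ, ∀ x, g x = ∑ i, c i * sin (l i * x + t i) := by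
  obtain ⟨n, c, w, rfl⟩ := mem_span_set'.mp hg
  choose p hp using fun i => (w i).2
  refine ⟨n + 1, n.succ_pos, Fin.cons 0 c, Fin.cons 0 fun i => (p i).1,
    Fin.cons 0 fun i => (p i).2, fun x => ?_⟩
  simp [Fin.sum_univ_succ, ← hp]

/-- Sine is a Tauber–Wiener function: finite linear combinations of dilated and
shifted sines are dense in `C[a,b]` for every interval `[a,b]`. -/
theorem sine_is_tauber_wiener (a b : ℝ) (hab : a < b) (f : ℝ → ℝ)
    (hf : ContinuousOn f (Set.Icc a b)) (ε : ℝ) (hε : 0 < ε) :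
    ∃ N : ℕ, 0 < N ∧ ∃ c lam θ : Fin N → ℝ,
      ∀ x ∈ Set.Icc a b,
        |f x - ∑ i : Fin N, c i * Real.sin (lam i * x + θ i)| < ε := by
  let F : C(ℝ, ℝ) :=
    ⟨Set.IccExtend hab.le ((Set.Icc a b).domRestrict f), continuous_IccExtend_iff.mpr hf.domRestrict⟩
  obtain ⟨g, hg, hgF⟩ :=
    ContinuousMap.exists_mem_subalgebra_near_continuous_of_isCompact_of_separatesPoints
      sineSubalgebra_separatesPoints F isCompact_Icc hε
  obtain ⟨N, hN, c, l, t, hg_sum⟩ := exists_sum_sin_of_mem_sineSubalgebra hg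
  refine ⟨N, hN, c, l, t, fun x hx => ?_⟩
  have hFx : F x = f x := Set.IccExtend_of_mem hab.le ((Set.Icc a b).domRestrict f) hx
  simpa only [Real.norm_eq_abs, abs_sub_comm, hg_sum, hFx] using hgF x hx
end

section
/- Every nondegenerate sinusoidal function is a Tauber–Wiener function: if g(x) = A sin(ωx + φ) with A ≠ 0 and ω ≠ 0, then for every real interval [a,b] with a < b, every continuous function f : [a,b] → ℝ, and every ε > 0, there exist a positive integer N and real constants c_i, λ_i, θ_i (i = 1,…,N) such that |f(x) − Σ_{i=1}^N c_i g(λ_i x + θ_i)| < ε for all x ∈ [a,b]. -/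
/-!
By the product-to-sum formula `sin u sin v = (cos (u - v) - cos (u + v)) / 2` and
`cos u = sin (u + π / 2)`, the linear span of the functions `x ↦ sin (l x + t)` is closed under
multiplication and contains `1 = sin (0 x + π / 2)`, so it is a subalgebra of `C(K, ℝ)`. On a
bounded set `K ⊆ [-R, R]` it separates points, because `x ↦ sin (x / R)` is injective there
(as `1 < π / 2`). Stone–Weierstrass makes it dense on a compact `K`, and the
affine change of variables `l x + t = ω (l / ω · x + (t - φ) / ω) + φ` writes each
`sin (l x + t)` as `A⁻¹ g (λ x + θ)`.
-/

open Real Set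

noncomputable section

section Sinusoid

variable (K : Set ℝ)

def sinusoid (l t : ℝ) : C(K, ℝ) := ⟨fun x => sin (l * x + t), by fun_prop⟩

@[simp]
theorem sinusoid_apply (l t : ℝ) (x : K) : sinusoid K l t x = sin (l * x + t) := rfl

def sinusoidSpan : Submodule ℝ C(K, ℝ) :=
  Submodule.span ℝ (range fun p : ℝ × ℝ => sinusoid K p.1 p.2)

theorem sinusoid_mem_sinusoidSpan (l t : ℝ) : sinusoid K l t ∈ sinusoidSpan K :=
  Submodule.subset_span ⟨(l, t), rfl⟩

theorem one_mem_sinusoidSpan : (1 : C(K, ℝ)) ∈ sinusoidSpan K := by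
  convert sinusoid_mem_sinusoidSpan K 0 (π / 2)
  ext x
  simp

theorem sinusoid_mul_sinusoid (l₁ t₁ l₂ t₂ : ℝ) :
    sinusoid K l₁ t₁ * sinusoid K l₂ t₂ =
      (1 / 2 : ℝ) • sinusoid K (l₁ - l₂) (t₁ - t₂ + π / 2) -
        (1 / 2 : ℝ) • sinusoid K (l₁ + l₂) (t₁ + t₂ + π / 2) := by
  ext x
  have hsub : (l₁ - l₂) * x + (t₁ - t₂ + π / 2) = (l₁ * x + t₁) - (l₂ * x + t₂) + π / 2 := by ring
  have hadd : (l₁ + l₂) * x + (t₁ + t₂ + π / 2) = (l₁ * x + t₁) + (l₂ * x + t₂) + π / 2 := by ring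
  simp only [ContinuousMap.mul_apply, ContinuousMap.sub_apply, ContinuousMap.smul_apply,
    sinusoid_apply, smul_eq_mul, hsub, hadd, sin_add_pi_div_two, cos_sub, cos_add]
  ring

theorem mul_mem_sinusoidSpan (p q : C(K, ℝ)) (hp : p ∈ sinusoidSpan K)
    (hq : q ∈ sinusoidSpan K) : p * q ∈ sinusoidSpan K := by
  have hpq := Submodule.mul_mem_mul hp hq
  rw [sinusoidSpan, Submodule.span_mul_span] at hpq
  refine Submodule.span_le.2 ?_ hpq
  rintro _ ⟨_, ⟨⟨l₁, t₁⟩, rfl⟩, _, ⟨⟨l₂, t₂⟩, rfl⟩, rfl⟩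
  change sinusoid K l₁ t₁ * sinusoid K l₂ t₂ ∈ sinusoidSpan K
  rw [sinusoid_mul_sinusoid]
  exact Submodule.sub_mem _ (Submodule.smul_mem _ _ (sinusoid_mem_sinusoidSpan K _ _))
    (Submodule.smul_mem _ _ (sinusoid_mem_sinusoidSpan K _ _))

def sinusoidAlgebra : Subalgebra ℝ C(K, ℝ) :=
  (sinusoidSpan K).toSubalgebra (one_mem_sinusoidSpan K) (mul_mem_sinusoidSpan K)

theorem mem_sinusoidAlgebra {p : C(K, ℝ)} : p ∈ sinusoidAlgebra K ↔ p ∈ sinusoidSpan K :=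
  Iff.rfl

theorem sinusoidAlgebra_separatesPoints (hK : Bornology.IsBounded K) :
    (sinusoidAlgebra K).SeparatesPoints := by
  obtain ⟨R, hR, hKR⟩ := hK.exists_pos_norm_le
  have hmaps : ∀ x : K, R⁻¹ * x + 0 ∈ Icc (-(π / 2)) (π / 2) := by
    intro x
    have hx : |R⁻¹ * x| ≤ 1 := by
      rw [abs_mul, abs_inv, abs_of_pos hR, inv_mul_le_one₀ hR]
      exact hKR x x.2
    have hpi : 1 ≤ π / 2 := by linarith [pi_gt_three]
    rw [add_zero, mem_Icc, ← abs_le]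
    exact hx.trans hpi
  intro x y hxy
  have hmem := (mem_sinusoidAlgebra K).2 (sinusoid_mem_sinusoidSpan K R⁻¹ 0)
  refine ⟨_, ⟨_, hmem, rfl⟩, fun hsin => hxy ?_⟩
  have := injOn_sin (hmaps x) (hmaps y) hsin
  exact Subtype.ext (by simpa [hR.ne'] using this)

theorem exists_sum_sinusoid_near [CompactSpace K] (F : C(K, ℝ)) {ε : ℝ} (hε : 0 < ε) :
    ∃ (n : ℕ) (c l t : Fin n → ℝ), ∀ x : K, |F x - ∑ i, c i * sin (l i * x + t i)| < ε := by
  have hK : Bornology.IsBounded K := (isCompact_iff_compactSpace.2 ‹_›).isBounded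
  obtain ⟨⟨h, hh⟩, hdist⟩ :=
    ContinuousMap.exists_mem_subalgebra_near_continuousMap_of_separatesPoints _
      (sinusoidAlgebra_separatesPoints K hK) F ε hε
  obtain ⟨n, c, v, rfl⟩ := Submodule.mem_span_set'.1 ((mem_sinusoidAlgebra K).1 hh)
  choose p hp using fun i => (v i).2
  refine ⟨n, c, fun i => (p i).1, fun i => (p i).2, fun x => ?_⟩
  have hsum : ∑ i, c i * sin ((p i).1 * x + (p i).2) = (∑ i, c i • (v i : C(K, ℝ))) x := by
    simp [← hp]
  rw [hsum, abs_sub_comm]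
  exact (ContinuousMap.norm_coe_le_norm _ x).trans_lt hdist

end Sinusoid

theorem sin_eq_inv_mul_of_sinusoidal {A ω φ : ℝ} (hA : A ≠ 0) (hω : ω ≠ 0) (l t x : ℝ) :
    sin (l * x + t) = A⁻¹ * (A * sin (ω * (l / ω * x + (t - φ) / ω) + φ)) := by
  have harg : ω * (l / ω * x + (t - φ) / ω) + φ = l * x + t := by
    field_simp
    ring
  rw [harg, inv_mul_cancel_left₀ hA]

theorem sinusoidal_is_tauber_wiener_general (A ω φ : ℝ) (hA : A ≠ 0) (hω : ω ≠ 0)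
    (g : ℝ → ℝ) (hg : ∀ x, g x = A * Real.sin (ω * x + φ))
    (a b : ℝ) (f : ℝ → ℝ)
    (hf : ContinuousOn f (Set.Icc a b)) (ε : ℝ) (hε : 0 < ε) :
    ∃ N : ℕ, 0 < N ∧ ∃ c lam θ : Fin N → ℝ,
      ∀ x ∈ Set.Icc a b,
        |f x - ∑ i : Fin N, c i * g (lam i * x + θ i)| < ε := by
  obtain ⟨n, c, l, t, hnear⟩ :=
    exists_sum_sinusoid_near (Icc a b) ⟨(Icc a b).domRestrict f, hf.domRestrict⟩ hε
  -- a zero summand makes the number of terms positive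
  refine ⟨n + 1, n.succ_pos, Fin.snoc (fun i => c i / A) 0, Fin.snoc (fun i => l i / ω) 0,
    Fin.snoc (fun i => (t i - φ) / ω) 0, fun x hx => ?_⟩
  simp only [Fin.sum_univ_castSucc, Fin.snoc_castSucc, Fin.snoc_last, zero_mul, add_zero, hg,
    div_eq_mul_inv (c _), mul_assoc, ← sin_eq_inv_mul_of_sinusoidal hA hω]
  exact hnear ⟨x, hx⟩

/-- Every nondegenerate sinusoidal function `g x = A sin (ω x + φ)` (with `A ≠ 0`,
`ω ≠ 0`) is a Tauber–Wiener function. -/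
theorem sinusoidal_is_tauber_wiener (A ω φ : ℝ) (hA : A ≠ 0) (hω : ω ≠ 0)
    (g : ℝ → ℝ) (hg : ∀ x, g x = A * Real.sin (ω * x + φ))
    (a b : ℝ) (hab : a < b) (f : ℝ → ℝ)
    (hf : ContinuousOn f (Set.Icc a b)) (ε : ℝ) (hε : 0 < ε) :
    ∃ N : ℕ, 0 < N ∧ ∃ c lam θ : Fin N → ℝ,
      ∀ x ∈ Set.Icc a b,
        |f x - ∑ i : Fin N, c i * g (lam i * x + θ i)| < ε :=
  sinusoidal_is_tauber_wiener_general A ω φ hA hω g hg a b f hf ε hε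
end
end

section
/- Key approximation step for periodic functions: if f : ℝ → ℝ is continuous and 2π-periodic, then for every ε > 0 there exist real polynomials p and q such that |f(θ) sin²θ − (p(cos θ) sin²θ + q(cos θ) sin θ)| < ε for all θ ∈ ℝ. -/
/-!
Write `f = g + h` with `g` even and `h` odd; then `f sin² = g sin² + (h sin) sin`, where `g` and
`h sin` are both even and `2π`-periodic. An even `2π`-periodic function `F` is determined by
`cos θ`, as `F θ = F (arccos (cos θ))`, and `F ∘ arccos` is continuous on `[-1, 1]`, so the
Weierstrass theorem gives polynomials with `g ≈ p(cos)` and `h sin ≈ q(cos)` uniformly on `ℝ`.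
The bound `|sin| ≤ 1` then controls the error.
-/

open Real Polynomial Function

namespace Function

variable {α : Type*} [AddCommGroup α]

noncomputable def evenPart (f : α → ℝ) : α → ℝ := fun x => (f x + f (-x)) / 2

noncomputable def oddPart (f : α → ℝ) : α → ℝ := fun x => (f x - f (-x)) / 2

lemma evenPart_add_oddPart (f : α → ℝ) (x : α) : evenPart f x + oddPart f x = f x := by
  simp only [evenPart, oddPart]; ring

lemma evenPart_even (f : α → ℝ) : (evenPart f).Even := fun x => by
  simp only [evenPart, neg_neg, add_comm]

lemma oddPart_odd (f : α → ℝ) : (oddPart f).Odd := fun x => by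
  simp only [oddPart, neg_neg]; ring

lemma Periodic.comp_neg {f : α → ℝ} {c : α} (h : Periodic f c) : Periodic (fun x => f (-x)) c :=
  fun x => by simpa only [neg_add] using h.neg (-x)

lemma Periodic.evenPart {f : α → ℝ} {c : α} (h : Periodic f c) :
    Periodic (Function.evenPart f) c :=
  fun x => by simp only [Function.evenPart, h x, h.comp_neg x]

lemma Periodic.oddPart {f : α → ℝ} {c : α} (h : Periodic f c) :
    Periodic (Function.oddPart f) c :=
  fun x => by simp only [Function.oddPart, h x, h.comp_neg x]

end Function

section Continuity

variable {α : Type*} [AddCommGroup α] [TopologicalSpace α] [ContinuousNeg α] {f : α → ℝ}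

lemma Continuous.evenPart (hf : Continuous f) : Continuous (Function.evenPart f) := by
  unfold Function.evenPart; fun_prop

lemma Continuous.oddPart (hf : Continuous f) : Continuous (Function.oddPart f) := by
  unfold Function.oddPart; fun_prop

end Continuity

namespace Function.Even

variable {F : ℝ → ℝ}

lemma eq_of_cos_eq (heven : F.Even) (hper : Periodic F (2 * π)) {a b : ℝ}
    (h : cos a = cos b) : F a = F b := by
  obtain ⟨k, rfl | rfl⟩ := cos_eq_cos_iff.mp h
  · rw [← hper.int_mul k a]; ring_nf
  · rw [← heven.eq, ← hper.int_mul k (-a)]; ring_nf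

lemma comp_arccos_cos (heven : F.Even) (hper : Periodic F (2 * π)) (θ : ℝ) :
    F (arccos (cos θ)) = F θ :=
  heven.eq_of_cos_eq hper (cos_arccos (neg_one_le_cos θ) (cos_le_one θ))

end Function.Even

theorem exists_polynomial_cos_near_of_even_of_periodic {F : ℝ → ℝ} (hF : Continuous F)
    (heven : F.Even) (hper : Periodic F (2 * π)) {ε : ℝ} (hε : 0 < ε) :
    ∃ p : ℝ[X], ∀ θ, |F θ - p.eval (cos θ)| < ε := by
  obtain ⟨p, hp⟩ := exists_polynomial_near_of_continuousOn (-1) 1 (F ∘ arccos)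
    (hF.comp continuous_arccos).continuousOn ε hε
  refine ⟨p, fun θ => ?_⟩
  simpa only [abs_sub_comm, comp_apply, heven.comp_arccos_cos hper] using
    hp (cos θ) ⟨neg_one_le_cos θ, cos_le_one θ⟩

lemma abs_mul_sin_sq_add_mul_sin_le (a b θ : ℝ) : |a * sin θ ^ 2 + b * sin θ| ≤ |a| + |b| :=
  calc |a * sin θ ^ 2 + b * sin θ|
      ≤ |a| * sin θ ^ 2 + |b| * |sin θ| :=
        (abs_add_le _ _).trans_eq (by rw [abs_mul, abs_mul, abs_sq])
    _ ≤ |a| * 1 + |b| * 1 := by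
        gcongr
        exacts [sin_sq_le_one θ, abs_sin_le_one θ]
    _ = |a| + |b| := by ring

/-- Key approximation step for periodic functions: a continuous `2π`-periodic
function multiplied by `sin² θ` can be uniformly approximated by
`p(cos θ) sin² θ + q(cos θ) sin θ` for real polynomials `p`, `q`. -/
theorem periodic_sin_sq_approx (f : ℝ → ℝ) (hf : Continuous f)
    (hper : ∀ θ : ℝ, f (θ + 2 * Real.pi) = f θ) (ε : ℝ) (hε : 0 < ε) :
    ∃ p q : Polynomial ℝ, ∀ θ : ℝ,
      |f θ * Real.sin θ ^ 2 -
        (p.eval (Real.cos θ) * Real.sin θ ^ 2 +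
          q.eval (Real.cos θ) * Real.sin θ)| < ε := by
  replace hper : Periodic f (2 * π) := hper
  obtain ⟨p, hp⟩ := exists_polynomial_cos_near_of_even_of_periodic hf.evenPart
    (evenPart_even f) hper.evenPart (half_pos hε)
  obtain ⟨q, hq⟩ := exists_polynomial_cos_near_of_even_of_periodic (hf.oddPart.mul continuous_sin)
    ((oddPart_odd f).mul_odd sin_neg) (hper.oddPart.mul sin_periodic) (half_pos hε)
  refine ⟨p, q, fun θ => ?_⟩
  calc _ = |(evenPart f θ - p.eval (cos θ)) * sin θ ^ 2 +
        (oddPart f θ * sin θ - q.eval (cos θ)) * sin θ| := by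
          rw [← evenPart_add_oddPart f θ]; ring_nf
    _ ≤ |evenPart f θ - p.eval (cos θ)| + |oddPart f θ * sin θ - q.eval (cos θ)| :=
        abs_mul_sin_sq_add_mul_sin_le _ _ θ
    _ < ε / 2 + ε / 2 := add_lt_add (hp θ) (hq θ)
    _ = ε := add_halves ε
end

section
/- Uniform approximation of a compact family of continuous functions by a single-hidden-layer network with shared inner parameters (Chen–Chen): Suppose K ⊆ ℝ^n is compact, 𝒮 is a compact subset of C(K), and g : ℝ → ℝ is a Tauber–Wiener function. Then for every ε > 0 there exist a positive integer N, real numbers θ_i, and vectors ω_i ∈ ℝ^n (i = 1,…,N), all independent of f, together with continuous linear functionals c_i on C(K) (i = 1,…,N), such that |f(x) − Σ_{i=1}^N c_i(f) g(ω_i · x + θ_i)| < ε holds for all x ∈ K and all f ∈ 𝒮. -/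
/-!
Since `𝒮` is compact it is uniformly equicontinuous, so for a fine enough partition of unity
`(ρⱼ)` centred at finitely many points `xⱼ ∈ K` the interpolants `∑ⱼ f(xⱼ) ρⱼ` approximate every
`f ∈ 𝒮` uniformly. Each `ρⱼ` is in turn a uniform limit of networks `∑ cₖ g(ωₖ · x + θₖ)`: by
Stone–Weierstrass the ridge functions `x ↦ exp(ω · x)` span a dense subalgebra of `C(K)`, and the
Tauber–Wiener property approximates `exp` on the bounded set `{ω · x | x ∈ K}`. Substituting these
networks for the `ρⱼ` gives inner parameters independent of `f` and outer coefficients that are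
multiples of the evaluations `f ↦ f(xⱼ)`.
-/

/-- A function `g : ℝ → ℝ` is a Tauber–Wiener function if for every interval
`[a,b]`, finite linear combinations `∑ cᵢ g (λᵢ x + θᵢ)` are dense in `C[a,b]`
with respect to the supremum norm. -/
def TauberWiener (g : ℝ → ℝ) : Prop :=
  ∀ a b : ℝ, a < b → ∀ f : ℝ → ℝ, ContinuousOn f (Set.Icc a b) →
    ∀ ε : ℝ, 0 < ε → ∃ N : ℕ, 0 < N ∧ ∃ c lam θ : Fin N → ℝ,
      ∀ x ∈ Set.Icc a b, |f x - ∑ i : Fin N, c i * g (lam i * x + θ i)| < ε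

open Set Submodule Metric

section UniformClosure

variable {X : Type*}

def uniformClosure (A : Set (X → ℝ)) : Set (X → ℝ) :=
  {f | ∀ ε > 0, ∃ a ∈ A, ∀ x, |f x - a x| < ε}

theorem subset_uniformClosure (A : Set (X → ℝ)) : A ⊆ uniformClosure A :=
  fun a ha _ hε => ⟨a, ha, fun x => by simpa using hε⟩

theorem uniformClosure_uniformClosure (A : Set (X → ℝ)) :
    uniformClosure (uniformClosure A) = uniformClosure A := by
  refine Subset.antisymm (fun f hf ε hε => ?_) (subset_uniformClosure _)
  obtain ⟨b, hb, hfb⟩ := hf (ε / 2) (half_pos hε)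
  obtain ⟨a, ha, hba⟩ := hb (ε / 2) (half_pos hε)
  refine ⟨a, ha, fun x => ?_⟩
  calc |f x - a x| ≤ |f x - b x| + |b x - a x| := abs_sub_le _ _ _
    _ < ε / 2 + ε / 2 := add_lt_add (hfb x) (hba x)
    _ = ε := add_halves ε

def Submodule.uniformClosure (p : Submodule ℝ (X → ℝ)) : Submodule ℝ (X → ℝ) where
  carrier := _root_.uniformClosure p
  zero_mem' := subset_uniformClosure _ p.zero_mem
  add_mem' := by
    intro f f' hf hf' ε hε
    obtain ⟨a, ha, hfa⟩ := hf (ε / 2) (half_pos hε)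
    obtain ⟨a', ha', hfa'⟩ := hf' (ε / 2) (half_pos hε)
    refine ⟨a + a', p.add_mem ha ha', fun x => ?_⟩
    calc |(f + f') x - (a + a') x| = |(f x - a x) + (f' x - a' x)| := by
          rw [Pi.add_apply, Pi.add_apply, add_sub_add_comm]
      _ ≤ |f x - a x| + |f' x - a' x| := abs_add_le _ _
      _ < ε / 2 + ε / 2 := add_lt_add (hfa x) (hfa' x)
      _ = ε := add_halves ε
  smul_mem' := by
    intro c f hf ε hε
    obtain ⟨a, ha, hfa⟩ := hf (ε / (|c| + 1)) (by positivity)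
    refine ⟨c • a, p.smul_mem c ha, fun x => ?_⟩
    calc |(c • f) x - (c • a) x| = |c| * |f x - a x| := by
          simp only [Pi.smul_apply, smul_eq_mul, ← mul_sub, abs_mul]
      _ ≤ |c| * (ε / (|c| + 1)) := by gcongr; exact (hfa x).le
      _ < ε := by
          rw [mul_div_assoc', div_lt_iff₀ (by positivity)]
          nlinarith

theorem ContinuousMap.isClosed_setOf_mem_uniformClosure [TopologicalSpace X] [CompactSpace X]
    (A : Set (X → ℝ)) : IsClosed {h : C(X, ℝ) | ⇑h ∈ uniformClosure A} := by
  refine isClosed_of_closure_subset fun h hh => ?_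
  rw [mem_ofPred_eq, ← uniformClosure_uniformClosure]
  intro ε hε
  obtain ⟨p, hp, hhp⟩ := Metric.mem_closure_iff.1 hh ε hε
  exact ⟨p, hp, fun x => (Real.dist_eq _ _).symm.trans_le (dist_apply_le_dist x) |>.trans_lt hhp⟩

end UniformClosure

theorem IsCompact.uniformEquicontinuous_coe {X α : Type*} [PseudoMetricSpace X] [CompactSpace X]
    [PseudoMetricSpace α] {𝒮 : Set C(X, α)} (h𝒮 : IsCompact 𝒮) :
    UniformEquicontinuous fun f : 𝒮 => ⇑(f : C(X, α)) := by
  have heval : UniformContinuousOn (fun p : C(X, α) × X => p.1 p.2) (𝒮 ×ˢ univ) :=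
    (h𝒮.prod isCompact_univ).uniformContinuousOn_of_continuous continuous_eval.continuousOn
  rw [Metric.uniformEquicontinuous_iff]
  intro ε hε
  obtain ⟨δ, hδ, h⟩ := Metric.uniformContinuousOn_iff.1 heval ε hε
  refine ⟨δ, hδ, fun x y hxy f => h (f, x) ⟨f.2, trivial⟩ (f, y) ⟨f.2, trivial⟩ ?_⟩
  rwa [Prod.dist_eq, dist_self, max_eq_right dist_nonneg]

theorem UniformEquicontinuous.exists_partitionOfUnity_sum_approx {X ι : Type*} [MetricSpace X]
    [CompactSpace X] {F : ι → X → ℝ} (hF : UniformEquicontinuous F) {ε : ℝ} (hε : 0 < ε) :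
    ∃ (t : Finset X) (ρ : PartitionOfUnity t X), ∀ i y, |F i y - ∑ x : t, F i x * ρ x y| ≤ ε := by
  obtain ⟨δ, hδ, hFδ⟩ := Metric.uniformEquicontinuous_iff.1 hF ε hε
  obtain ⟨t, ht⟩ := isCompact_univ.elim_finite_subcover (fun x : X => ball x δ)
    (fun _ => isOpen_ball) fun y _ => mem_iUnion.2 ⟨y, mem_ball_self hδ⟩
  obtain ⟨ρ, hρ⟩ := PartitionOfUnity.exists_isSubordinate isClosed_univ
    (fun x : t => ball (x : X) δ) (fun _ => isOpen_ball) (by simpa [iUnion_subtype] using ht)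
  refine ⟨t, ρ, fun i y => ?_⟩
  have hmem := ρ.finsum_smul_mem_convex (g := fun x _ => F i x) (mem_univ y)
    (fun x hx => mem_closedBall'.2 (hFδ y x (hρ x (subset_tsupport _ hx)) i).le)
    (convex_closedBall (F i y) ε)
  simpa [finsum_eq_sum_of_fintype, mul_comm, Real.dist_eq, abs_sub_comm] using hmem

section Ridge

variable {n : ℕ} (K : Set (Fin n → ℝ))

def ridge (g : ℝ → ℝ) (ω : Fin n → ℝ) (θ : ℝ) : K → ℝ :=
  fun x => g (ω ⬝ᵥ (x : Fin n → ℝ) + θ)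

/-- `g` need not be continuous, so networks live in `K → ℝ` rather than `C(K, ℝ)`, and
approximation by them is measured through `uniformClosure`. -/
def ridgeNetworks (g : ℝ → ℝ) : Submodule ℝ (K → ℝ) :=
  span ℝ (range fun p : (Fin n → ℝ) × ℝ => ridge K g p.1 p.2)

/-- Being closed under products, these span a subalgebra, to which Stone–Weierstrass applies. -/
def expRidges : Submonoid C(K, ℝ) where
  carrier := range fun ω : Fin n → ℝ => ⟨fun x => Real.exp (ω ⬝ᵥ (x : Fin n → ℝ)), by fun_prop⟩
  one_mem' := ⟨0, by ext; simp⟩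
  mul_mem' := by
    rintro _ _ ⟨ω, rfl⟩ ⟨ω', rfl⟩
    exact ⟨ω + ω', by ext; simp [add_dotProduct, Real.exp_add]⟩

theorem dense_span_expRidges [CompactSpace K] :
    Dense (span ℝ (expRidges K : Set C(K, ℝ)) : Set C(K, ℝ)) := by
  have hsep : (Algebra.adjoin ℝ (expRidges K : Set C(K, ℝ))).SeparatesPoints := by
    intro x y hxy
    obtain ⟨j, hj⟩ := Function.ne_iff.mp (Subtype.coe_injective.ne hxy)
    refine ⟨_, ⟨_, Algebra.subset_adjoin ⟨Pi.single j 1, rfl⟩, rfl⟩, ?_⟩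
    simpa [single_one_dotProduct] using hj
  have hspan : span ℝ (expRidges K : Set C(K, ℝ)) =
      Subalgebra.toSubmodule (Algebra.adjoin ℝ (expRidges K : Set C(K, ℝ))) := by
    rw [Algebra.adjoin_eq_span, Submonoid.closure_eq]
  rw [dense_iff_closure_eq, hspan, Subalgebra.coe_toSubmodule, ← Subalgebra.topologicalClosure_coe,
    ContinuousMap.subalgebra_topologicalClosure_eq_top_of_separatesPoints _ hsep, Algebra.coe_top]

variable {K}

theorem comp_dotProduct_mem_uniformClosure_ridgeNetworks {g : ℝ → ℝ} (hg : TauberWiener g)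
    (hK : IsCompact K) {φ : ℝ → ℝ} (hφ : Continuous φ) (ω : Fin n → ℝ) :
    (fun x : K => φ (ω ⬝ᵥ (x : Fin n → ℝ))) ∈ uniformClosure (ridgeNetworks K g : Set (K → ℝ)) := by
  obtain ⟨R, hR⟩ := hK.exists_bound_of_continuousOn (f := fun x => ω ⬝ᵥ x) (by fun_prop)
  intro ε hε
  obtain ⟨N, -, c, lam, θ, hc⟩ :=
    hg (-(|R| + 1)) (|R| + 1) (by linarith [abs_nonneg R]) φ hφ.continuousOn ε hε
  refine ⟨∑ i, c i • ridge K g (lam i • ω) (θ i),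
    sum_mem fun i _ => smul_mem _ _ (subset_span ⟨(lam i • ω, θ i), rfl⟩), fun x => ?_⟩
  have hx : |ω ⬝ᵥ (x : Fin n → ℝ)| ≤ |R| + 1 := by
    linarith [hR x x.2, le_abs_self R, Real.norm_eq_abs (ω ⬝ᵥ (x : Fin n → ℝ))]
  simpa [ridge, smul_dotProduct] using hc _ (abs_le.1 hx)

theorem mem_uniformClosure_ridgeNetworks {g : ℝ → ℝ} (hg : TauberWiener g) (hK : IsCompact K)
    (h : C(K, ℝ)) : ⇑h ∈ uniformClosure (ridgeNetworks K g : Set (K → ℝ)) := by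
  have := isCompact_iff_compactSpace.mp hK
  let V := (ridgeNetworks K g).uniformClosure.comap (ContinuousMap.coeFnLinearMap ℝ)
  have hV : IsClosed (V : Set C(K, ℝ)) := ContinuousMap.isClosed_setOf_mem_uniformClosure _
  have hexp : span ℝ (expRidges K : Set C(K, ℝ)) ≤ V := by
    rw [span_le]
    rintro _ ⟨ω, rfl⟩
    exact comp_dotProduct_mem_uniformClosure_ridgeNetworks hg hK Real.continuous_exp ω
  exact closure_minimal hexp hV (dense_span_expRidges K h)

end Ridge

section RidgeOperators

def ridgeOperators (V : Type*) [AddCommGroup V] [Module ℝ V] [TopologicalSpace V] {n : ℕ}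
    (K : Set (Fin n → ℝ)) (g : ℝ → ℝ) : Submodule ℝ (V → K → ℝ) :=
  span ℝ {T | ∃ (c : V →L[ℝ] ℝ) (ω : Fin n → ℝ) (θ : ℝ), T = fun f => c f • ridge K g ω θ}

variable {V : Type*} [AddCommGroup V] [Module ℝ V] [TopologicalSpace V]
  {n : ℕ} {K : Set (Fin n → ℝ)} {g : ℝ → ℝ}

theorem smul_mem_ridgeOperators (ℓ : V →L[ℝ] ℝ) {r : K → ℝ} (hr : r ∈ ridgeNetworks K g) :
    (fun f => ℓ f • r) ∈ ridgeOperators V K g := by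
  induction hr using Submodule.span_induction with
  | mem _ h =>
    obtain ⟨⟨ω, θ⟩, rfl⟩ := h
    exact subset_span ⟨ℓ, ω, θ, rfl⟩
  | zero => convert (ridgeOperators V K g).zero_mem using 1; ext; simp
  | add r r' _ _ hr hr' => convert add_mem hr hr' using 1; ext; simp [mul_add]
  | smul a r _ hr => convert smul_mem _ a hr using 1; ext; simp [mul_left_comm]

theorem exists_eq_sum_of_mem_ridgeOperators {T : V → K → ℝ} (hT : T ∈ ridgeOperators V K g) :
    ∃ N : ℕ, 0 < N ∧ ∃ (θ : Fin N → ℝ) (ω : Fin N → Fin n → ℝ) (c : Fin N → V →L[ℝ] ℝ),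
      ∀ f x, T f x = ∑ i, c i f * g (ω i ⬝ᵥ (x : Fin n → ℝ) + θ i) := by
  obtain ⟨N, a, T', rfl⟩ := mem_span_set'.1 hT
  choose c ω θ hT' using fun i => (T' i).2
  -- a leading zero neuron makes the width positive even for the empty sum
  refine ⟨N + 1, N.succ_pos, Fin.cons 0 θ, Fin.cons 0 ω, Fin.cons 0 fun i => a i • c i,
    fun f x => ?_⟩
  simp [Fin.sum_univ_succ, hT', ridge, mul_assoc]

end RidgeOperators

theorem exists_mem_ridgeOperators_abs_sum_sub_lt {V : Type*} [NormedAddCommGroup V]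
    [NormedSpace ℝ V] {n : ℕ} {K : Set (Fin n → ℝ)} {g : ℝ → ℝ} {ι : Type*} [Fintype ι] (ℓ : ι → V →L[ℝ] ℝ)
    {φ : ι → K → ℝ} (hφ : ∀ i, φ i ∈ uniformClosure (ridgeNetworks K g : Set (K → ℝ)))
    {𝒮 : Set V} (h𝒮 : Bornology.IsBounded 𝒮) {ε : ℝ} (hε : 0 < ε) :
    ∃ T ∈ ridgeOperators V K g, ∀ f ∈ 𝒮, ∀ x, |∑ i, ℓ i f * φ i x - T f x| < ε := by
  obtain ⟨R, hR0, hR⟩ := h𝒮.exists_pos_norm_le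
  set B := ∑ i, ‖ℓ i‖ * R
  have hB : 0 ≤ B := by positivity
  choose r hr hφr using fun i => hφ i (ε / (B + 1)) (by positivity)
  refine ⟨∑ i, fun f => ℓ i f • r i, sum_mem fun i _ => smul_mem_ridgeOperators (ℓ i) (hr i),
    fun f hf x => ?_⟩
  have hℓ : ∀ i, |ℓ i f| ≤ ‖ℓ i‖ * R := fun i =>
    ((ℓ i).le_opNorm f).trans (by gcongr; exact hR f hf)
  calc |∑ i, ℓ i f * φ i x - (∑ i, fun f => ℓ i f • r i) f x|
        = |∑ i, ℓ i f * (φ i x - r i x)| := by simp [Finset.sum_apply, mul_sub]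
    _ ≤ ∑ i, |ℓ i f| * |φ i x - r i x| := by
        simpa only [abs_mul] using Finset.abs_sum_le_sum_abs (fun i => ℓ i f * (φ i x - r i x)) _
    _ ≤ ∑ i, ‖ℓ i‖ * R * (ε / (B + 1)) := by
        gcongr with i
        exacts [hℓ i, (hφr i x).le]
    _ = B * (ε / (B + 1)) := by rw [Finset.sum_mul]
    _ < ε := by
        rw [mul_div_assoc', div_lt_iff₀ (by positivity)]
        nlinarith

/-- Chen–Chen: uniform approximation of a compact family of continuous
functions by a single-hidden-layer network with shared inner parameters, the
outer coefficients being continuous linear functionals of the target. -/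
theorem chen_chen_function_approximation
    (n : ℕ) (K : Set (Fin n → ℝ)) (hK : IsCompact K)
    (𝒮 : Set C(K, ℝ)) (h𝒮 : IsCompact 𝒮)
    (g : ℝ → ℝ) (hg : TauberWiener g) (ε : ℝ) (hε : 0 < ε) :
    ∃ N : ℕ, 0 < N ∧ ∃ (θ : Fin N → ℝ) (ω : Fin N → Fin n → ℝ)
      (c : Fin N → (C(K, ℝ) →L[ℝ] ℝ)),
      ∀ f ∈ 𝒮, ∀ x : K,
        |f x - ∑ i : Fin N,
          c i f * g ((∑ j : Fin n, ω i j * (x : Fin n → ℝ) j) + θ i)| < ε := by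
  have := isCompact_iff_compactSpace.mp hK
  obtain ⟨t, ρ, hρ⟩ :=
    h𝒮.uniformEquicontinuous_coe.exists_partitionOfUnity_sum_approx (half_pos hε)
  obtain ⟨T, hT, hTρ⟩ := exists_mem_ridgeOperators_abs_sum_sub_lt
    (fun x : t => ContinuousMap.evalCLM ℝ (x : K))
    (fun x => mem_uniformClosure_ridgeNetworks hg hK (ρ x)) h𝒮.isBounded (half_pos hε)
  obtain ⟨N, hN, θ, ω, c, hTc⟩ := exists_eq_sum_of_mem_ridgeOperators hT
  refine ⟨N, hN, θ, ω, c, fun f hf y => ?_⟩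
  calc |f y - ∑ i, c i f * g (ω i ⬝ᵥ (y : Fin n → ℝ) + θ i)|
      = |(f y - ∑ x : t, f x * ρ x y) + (∑ x : t, f x * ρ x y - T f y)| := by
        rw [hTc, sub_add_sub_cancel]
    _ ≤ |f y - ∑ x : t, f x * ρ x y| + |∑ x : t, f x * ρ x y - T f y| := abs_add_le _ _
    _ < ε / 2 + ε / 2 := add_lt_add_of_le_of_lt (hρ ⟨f, hf⟩ y) (hTρ f hf y)
    _ = ε := add_halves ε
end

section
/- Convergence and validity of the full sine-series heat solution: let (A_k)_{k≥1} be a bounded sequence of real numbers and define s(x,t) = Σ_{k=1}^∞ A_k e^{−k² t} sin(kπx). Then for every δ > 0 the series converges uniformly on [0,1] × [δ, ∞); the function s is smooth on (0,1) × (0,∞) (with term-by-term differentiation valid to all orders); it satisfies ∂s/∂t = (1/π²) ∂²s/∂x² on (0,1) × (0,∞); and s(0,t) = s(1,t) = 0 for all t > 0. -/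
open Real Filter
open scoped BigOperators Topology


private lemma heat_sum_exp_lin (m : ℕ) {δ : ℝ} (hδ : 0 < δ) :
    Summable (fun k : ℕ => ((k:ℝ)+1)^m * Real.exp (-((k:ℝ)+1) * δ)) := by
  have hr : ‖Real.exp (-δ)‖ < 1 := by
    rw [Real.norm_eq_abs, abs_of_pos (Real.exp_pos _)]
    exact Real.exp_lt_one_iff.mpr (by linarith)
  have h1 : Summable (fun n : ℕ => (n:ℝ)^m * Real.exp (-δ) ^ n) :=
    summable_pow_mul_geometric_of_norm_lt_one m hr
  have h2 : Summable (fun k : ℕ => ((k+1:ℕ):ℝ)^m * Real.exp (-δ) ^ (k+1)) :=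
    (summable_nat_add_iff 1).mpr h1
  refine h2.congr fun k => ?_
  have h3 : Real.exp (-δ) ^ (k+1) = Real.exp (-((k:ℝ)+1) * δ) := by
    rw [← Real.exp_nat_mul]
    congr 1
    push_cast; ring
  rw [h3]
  push_cast; ring

private lemma heat_sum_exp_sq (m : ℕ) {δ : ℝ} (hδ : 0 < δ) :
    Summable (fun k : ℕ => ((k:ℝ)+1)^m * Real.exp (-(((k:ℝ)+1)^2) * δ)) := by
  refine Summable.of_nonneg_of_le (fun k => by positivity) (fun k => ?_)
    (heat_sum_exp_lin m hδ)
  have hk : (0:ℝ) ≤ (k:ℝ) := Nat.cast_nonneg k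
  have : Real.exp (-(((k:ℝ)+1)^2) * δ) ≤ Real.exp (-((k:ℝ)+1) * δ) := by
    apply Real.exp_le_exp.mpr
    nlinarith [mul_nonneg (mul_nonneg hk (by linarith : (0:ℝ) ≤ (k:ℝ)+1)) hδ.le]
  exact mul_le_mul_of_nonneg_left this (by positivity)

private lemma heat_term_bound {a e sn M E : ℝ} (ha : |a| ≤ M) (he : |e| ≤ E) (hsn : |sn| ≤ 1) :
    ‖a * e * sn‖ ≤ M * E := by
  have h1 : |a| * |e| ≤ M * E := mul_le_mul ha he (abs_nonneg _) ((abs_nonneg a).trans ha)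
  have h2 : |a| * |e| * |sn| ≤ M * E * 1 :=
    mul_le_mul h1 hsn (abs_nonneg _) ((by positivity : (0:ℝ) ≤ |a| * |e|).trans h1)
  calc ‖a * e * sn‖ = |a| * |e| * |sn| := by rw [Real.norm_eq_abs, abs_mul, abs_mul]
  _ ≤ M * E * 1 := h2
  _ = M * E := mul_one _

private lemma heat_norm_cexp (w : ℂ) : ‖Complex.exp w‖ = Real.exp w.re := by
  rw [Complex.norm_exp]

private lemma heat_abs_csin (w : ℂ) : ‖Complex.sin w‖ ≤ Real.exp |w.im| := by
  have ha : ‖Complex.exp (-w * Complex.I)‖ ≤ Real.exp |w.im| := by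
    rw [heat_norm_cexp]
    apply Real.exp_le_exp.mpr
    have : (-w * Complex.I).re = w.im := by simp
    rw [this]; exact le_abs_self _
  have hb : ‖Complex.exp (w * Complex.I)‖ ≤ Real.exp |w.im| := by
    rw [heat_norm_cexp]
    apply Real.exp_le_exp.mpr
    have : (w * Complex.I).re = -w.im := by simp
    rw [this]; exact neg_le_abs _
  have h2 : ‖Complex.sin w‖ = ‖Complex.exp (-w * Complex.I) - Complex.exp (w * Complex.I)‖ / 2 := by
    rw [Complex.sin]
    rw [norm_div, norm_mul]
    simp
  rw [h2]
  have := norm_sub_le (Complex.exp (-w * Complex.I)) (Complex.exp (w * Complex.I))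
  linarith

private lemma heat_abs_ccos (w : ℂ) : ‖Complex.cos w‖ ≤ Real.exp |w.im| := by
  have ha : ‖Complex.exp (-w * Complex.I)‖ ≤ Real.exp |w.im| := by
    rw [heat_norm_cexp]
    apply Real.exp_le_exp.mpr
    have : (-w * Complex.I).re = w.im := by simp
    rw [this]; exact le_abs_self _
  have hb : ‖Complex.exp (w * Complex.I)‖ ≤ Real.exp |w.im| := by
    rw [heat_norm_cexp]
    apply Real.exp_le_exp.mpr
    have : (w * Complex.I).re = -w.im := by simp
    rw [this]; exact neg_le_abs _
  have h2 : ‖Complex.cos w‖ = ‖Complex.exp (w * Complex.I) + Complex.exp (-w * Complex.I)‖ / 2 := by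
    rw [Complex.cos, norm_div]
    simp
  rw [h2]
  have := norm_add_le (Complex.exp (w * Complex.I)) (Complex.exp (-w * Complex.I))
  linarith

private noncomputable def heatDelta (j : ℕ) : BoundedContinuousFunction ℕ ℂ :=
  BoundedContinuousFunction.ofNormedAddCommGroup (fun n => if n = j then 1 else 0)
    continuous_of_discreteTopology 1 (fun n => by split <;> simp)

private lemma heatDelta_apply (j n : ℕ) : heatDelta j n = if n = j then 1 else 0 := rfl

private lemma heat_norm_smul_delta_le (c : ℂ) (k : ℕ) : ‖c • heatDelta k‖ ≤ ‖c‖ := by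
  rw [norm_smul]
  have h1 : ‖heatDelta k‖ ≤ 1 :=
    BoundedContinuousFunction.norm_ofNormedAddCommGroup_le _ zero_le_one _
  calc ‖c‖ * ‖heatDelta k‖ ≤ ‖c‖ * 1 := mul_le_mul_of_nonneg_left h1 (norm_nonneg _)
  _ = ‖c‖ := mul_one _

private lemma heatPhi_summable {w : ℕ → ℝ} (hw : ∀ k, 0 ≤ w k) (hsw : Summable w)
    (f : BoundedContinuousFunction ℕ ℂ) : Summable (fun k => (w k : ℂ) * f k) := by
  apply Summable.of_norm
  refine Summable.of_nonneg_of_le (fun k => norm_nonneg _) (fun k => ?_) (hsw.mul_right ‖f‖)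
  rw [norm_mul, Complex.norm_real, Real.norm_eq_abs, abs_of_nonneg (hw k)]
  exact mul_le_mul_of_nonneg_left (f.norm_coe_le_norm k) (hw k)

private noncomputable def heatPhi {w : ℕ → ℝ} (hw : ∀ k, 0 ≤ w k) (hsw : Summable w) :
    BoundedContinuousFunction ℕ ℂ →L[ℂ] ℂ :=
  LinearMap.mkContinuous
    { toFun := fun f => ∑' k, (w k : ℂ) * f k
      map_add' := fun f g => by
        show (∑' k, (w k:ℂ) * (f + g) k) = (∑' k, (w k:ℂ) * f k) + ∑' k, (w k:ℂ) * g k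
        have : (fun k => (w k:ℂ) * (f + g) k) = fun k => (w k:ℂ) * f k + (w k:ℂ) * g k := by
          funext k
          simp [mul_add]
        rw [this, Summable.tsum_add (heatPhi_summable hw hsw f) (heatPhi_summable hw hsw g)]
      map_smul' := fun c f => by
        have : (fun k => (w k:ℂ) * (c • f) k) = fun k => c * ((w k:ℂ) * f k) := by
          funext k
          simp only [BoundedContinuousFunction.coe_smul, Pi.smul_apply, smul_eq_mul]
          ring
        show (∑' k, (w k:ℂ) * (c • f) k) = (RingHom.id ℂ) c • ∑' k, (w k:ℂ) * f k
        simp only [RingHom.id_apply, smul_eq_mul]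
        rw [this, tsum_mul_left] }
    (∑' k, w k)
    (fun f => by
      have hb : ∀ k, ‖(w k:ℂ) * f k‖ ≤ w k * ‖f‖ := fun k => by
        rw [norm_mul, Complex.norm_real, Real.norm_eq_abs, abs_of_nonneg (hw k)]
        exact mul_le_mul_of_nonneg_left (f.norm_coe_le_norm k) (hw k)
      have hsn : Summable (fun k => ‖(w k:ℂ) * f k‖) :=
        Summable.of_nonneg_of_le (fun k => norm_nonneg _) hb (hsw.mul_right ‖f‖)
      calc ‖∑' k, (w k:ℂ) * f k‖ ≤ ∑' k, ‖(w k:ℂ) * f k‖ := norm_tsum_le_tsum_norm hsn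
      _ ≤ ∑' k, w k * ‖f‖ := Summable.tsum_le_tsum hb hsn (hsw.mul_right ‖f‖)
      _ = (∑' k, w k) * ‖f‖ := tsum_mul_right)

private lemma heatPhi_apply {w : ℕ → ℝ} (hw : ∀ k, 0 ≤ w k) (hsw : Summable w)
    (f : BoundedContinuousFunction ℕ ℂ) : heatPhi hw hsw f = ∑' k, (w k : ℂ) * f k := rfl

private lemma heat_tsum_delta_apply (c : ℕ → ℂ)
    (h : Summable (fun k => c k • heatDelta k)) (n : ℕ) :
    (∑' k, c k • heatDelta k) n = c n := by
  have h1 := (BoundedContinuousFunction.evalCLM ℂ (β := ℂ) n).map_tsum h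
  have h2 : (∑' k, c k • heatDelta k) n = ∑' k, (c k • heatDelta k) n := h1
  rw [h2]
  have h3 : (fun k => (c k • heatDelta k) n) = fun k => if n = k then c k else 0 := by
    funext k
    by_cases hnk : n = k <;> simp [heatDelta_apply, hnk]
  rw [h3, tsum_eq_single n (fun k hk => by simp [Ne.symm hk])]
  simp
private noncomputable def heatU (A : ℕ → ℝ) (σ : ℝ) (τ : ℂ) : BoundedContinuousFunction ℕ ℂ :=
  ∑' k : ℕ, ((A (k+1) : ℂ) * Complex.exp (-(((k:ℕ):ℂ)+1)^2 * (τ - (σ:ℂ)))) • heatDelta k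

private lemma heat_norm_uk (A : ℕ → ℝ) (k : ℕ) (σ : ℝ) (τ : ℂ) :
    ‖(A (k+1):ℂ) * Complex.exp (-(((k:ℕ):ℂ)+1)^2 * (τ - (σ:ℂ)))‖
      = |A (k+1)| * Real.exp (-(((k:ℝ)+1)^2) * (τ.re - σ)) := by
  rw [norm_mul, Complex.norm_real, Real.norm_eq_abs, heat_norm_cexp]
  have hc : (-(((k:ℕ):ℂ)+1)^2 : ℂ) = ((-(((k:ℝ)+1)^2) : ℝ) : ℂ) := by push_cast; ring
  have : (-(((k:ℕ):ℂ)+1)^2 * (τ - (σ:ℂ))).re = -(((k:ℝ)+1)^2) * (τ.re - σ) := by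
    rw [hc, Complex.re_ofReal_mul, Complex.sub_re, Complex.ofReal_re]
  rw [this]

private lemma heatU_summable {A : ℕ → ℝ} {M : ℝ} (hA : ∀ k, |A k| ≤ M) {σ : ℝ} {τ : ℂ}
    (h : 0 < τ.re - σ) :
    Summable (fun k : ℕ =>
      ((A (k+1) : ℂ) * Complex.exp (-(((k:ℕ):ℂ)+1)^2 * (τ - (σ:ℂ)))) • heatDelta k) := by
  apply Summable.of_norm
  have hsum : Summable (fun k : ℕ => M * (((k:ℝ)+1)^0 * Real.exp (-(((k:ℝ)+1)^2) * (τ.re - σ)))) :=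
    (heat_sum_exp_sq 0 h).mul_left M
  refine Summable.of_nonneg_of_le (fun k => norm_nonneg _) (fun k => ?_)
    (hsum.congr fun k => by rw [pow_zero, one_mul])
  calc ‖((A (k+1) : ℂ) * Complex.exp (-(((k:ℕ):ℂ)+1)^2 * (τ - (σ:ℂ)))) • heatDelta k‖
      ≤ ‖(A (k+1) : ℂ) * Complex.exp (-(((k:ℕ):ℂ)+1)^2 * (τ - (σ:ℂ)))‖ :=
        heat_norm_smul_delta_le _ _
  _ = |A (k+1)| * Real.exp (-(((k:ℝ)+1)^2) * (τ.re - σ)) := heat_norm_uk A k σ τ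
  _ ≤ M * Real.exp (-(((k:ℝ)+1)^2) * (τ.re - σ)) :=
        mul_le_mul_of_nonneg_right (hA _) (Real.exp_pos _).le

private lemma heatU_analyticAt {A : ℕ → ℝ} {M : ℝ} (hA : ∀ k, |A k| ≤ M) {σ σ₂ : ℝ}
    (hσσ₂ : σ < σ₂) {τ₀ : ℂ} (hτ₀ : σ₂ < τ₀.re) : AnalyticAt ℂ (heatU A σ) τ₀ := by
  have hM : 0 ≤ M := (abs_nonneg _).trans (hA 0)
  set S : Set ℂ := {τ : ℂ | σ₂ < τ.re} with hS
  have hopen : IsOpen S := isOpen_lt continuous_const Complex.continuous_re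
  have hpre : IsPreconnected S := (convex_halfSpace_re_gt σ₂).isPreconnected
  have key : ∀ τ ∈ S, HasDerivAt (heatU A σ)
      (∑' k : ℕ, ((-(((k:ℕ):ℂ)+1)^2) *
        ((A (k+1) : ℂ) * Complex.exp (-(((k:ℕ):ℂ)+1)^2 * (τ - (σ:ℂ))))) • heatDelta k) τ := by
    intro τ hτ
    have := hasDerivAt_tsum_of_isPreconnected
      (u := fun k : ℕ => M * (((k:ℝ)+1)^2 * Real.exp (-(((k:ℝ)+1)^2) * (σ₂ - σ))))
      (g := fun k τ =>
        ((A (k+1) : ℂ) * Complex.exp (-(((k:ℕ):ℂ)+1)^2 * (τ - (σ:ℂ)))) • heatDelta k)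
      (g' := fun k τ => ((-(((k:ℕ):ℂ)+1)^2) *
        ((A (k+1) : ℂ) * Complex.exp (-(((k:ℕ):ℂ)+1)^2 * (τ - (σ:ℂ))))) • heatDelta k)
      (y₀ := ((σ₂+1 : ℝ) : ℂ))
      ((heat_sum_exp_sq 2 (by linarith : (0:ℝ) < σ₂ - σ)).mul_left M)
      hopen hpre ?_ ?_ ?_ ?_ hτ
    · exact this
    · -- HasDerivAt of each term
      intro k τ' hτ'
      have h1 : HasDerivAt (fun τ : ℂ => -(((k:ℕ):ℂ)+1)^2 * (τ - (σ:ℂ)))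
          (-(((k:ℕ):ℂ)+1)^2) τ' := by
        simpa using ((hasDerivAt_id τ').sub_const ((σ:ℂ))).const_mul (-(((k:ℕ):ℂ)+1)^2)
      have h2 := (h1.cexp.const_mul ((A (k+1) : ℂ))).smul_const (heatDelta k)
      convert h2 using 2
      ring
    · -- norm bound
      intro k τ' hτ'
      have hc : ‖(-(((k:ℕ):ℂ)+1)^2 : ℂ)‖ = ((k:ℝ)+1)^2 := by
        have : (-(((k:ℕ):ℂ)+1)^2 : ℂ) = ((-(((k:ℝ)+1)^2) : ℝ) : ℂ) := by push_cast; ring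
        rw [this, Complex.norm_real, Real.norm_eq_abs, abs_neg, abs_of_nonneg (by positivity)]
      calc ‖((-(((k:ℕ):ℂ)+1)^2) *
            ((A (k+1) : ℂ) * Complex.exp (-(((k:ℕ):ℂ)+1)^2 * (τ' - (σ:ℂ))))) • heatDelta k‖
          ≤ ‖(-(((k:ℕ):ℂ)+1)^2) *
            ((A (k+1) : ℂ) * Complex.exp (-(((k:ℕ):ℂ)+1)^2 * (τ' - (σ:ℂ))))‖ :=
            heat_norm_smul_delta_le _ _
      _ = ((k:ℝ)+1)^2 * (|A (k+1)| * Real.exp (-(((k:ℝ)+1)^2) * (τ'.re - σ))) := by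
            rw [norm_mul, hc, heat_norm_uk]
      _ ≤ ((k:ℝ)+1)^2 * (M * Real.exp (-(((k:ℝ)+1)^2) * (σ₂ - σ))) := by
            have hmono : Real.exp (-(((k:ℝ)+1)^2) * (τ'.re - σ))
                ≤ Real.exp (-(((k:ℝ)+1)^2) * (σ₂ - σ)) := by
              apply Real.exp_le_exp.mpr
              have hre : σ₂ < τ'.re := hτ'
              nlinarith [sq_nonneg ((k:ℝ)+1)]
            have := mul_le_mul (hA (k+1)) hmono (Real.exp_pos _).le hM
            exact mul_le_mul_of_nonneg_left this (by positivity)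
      _ = M * (((k:ℝ)+1)^2 * Real.exp (-(((k:ℝ)+1)^2) * (σ₂ - σ))) := by ring
    · show ((σ₂+1:ℝ):ℂ) ∈ S
      simp [hS]
    · exact heatU_summable hA (by simp; linarith)
  have hdiff : DifferentiableOn ℂ (heatU A σ) S :=
    fun τ hτ => ((key τ hτ).differentiableAt).differentiableWithinAt
  exact (hdiff.analyticOnNhd hopen) τ₀ hτ₀
private noncomputable def heatV (σ : ℝ) (z : ℂ) : BoundedContinuousFunction ℕ ℂ :=
  ∑' k : ℕ, (Complex.exp (-(((k:ℕ):ℂ)+1)^2 * ((σ:ℂ)/2)) *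
    Complex.sin ((((k:ℕ):ℂ)+1) * (π:ℂ) * z)) • heatDelta k

private lemma heat_cast_sq (k : ℕ) (r : ℝ) :
    (-(((k:ℕ):ℂ)+1)^2 * (r:ℂ) : ℂ) = ((-(((k:ℝ)+1)^2) * r : ℝ) : ℂ) := by push_cast; ring

private lemma heat_norm_E (k : ℕ) (σ : ℝ) :
    ‖Complex.exp (-(((k:ℕ):ℂ)+1)^2 * ((σ:ℂ)/2))‖ = Real.exp (-(((k:ℝ)+1)^2) * (σ/2)) := by
  have h : (-(((k:ℕ):ℂ)+1)^2 * ((σ:ℂ)/2) : ℂ) = ((-(((k:ℝ)+1)^2) * (σ/2) : ℝ) : ℂ) := by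
    push_cast; ring
  rw [h, heat_norm_cexp, Complex.ofReal_re]

private lemma heat_im_arg (k : ℕ) (z : ℂ) :
    ((((k:ℕ):ℂ)+1) * (π:ℂ) * z).im = (((k:ℝ)+1) * π) * z.im := by
  have h : ((((k:ℕ):ℂ)+1) * (π:ℂ) : ℂ) = (((((k:ℝ)+1) * π) : ℝ) : ℂ) := by push_cast; ring
  rw [h, Complex.im_ofReal_mul]

private lemma heatV_summable {σ : ℝ} (hσ : 0 < σ) (x : ℝ) :
    Summable (fun k : ℕ => (Complex.exp (-(((k:ℕ):ℂ)+1)^2 * ((σ:ℂ)/2)) *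
      Complex.sin ((((k:ℕ):ℂ)+1) * (π:ℂ) * (x:ℂ))) • heatDelta k) := by
  apply Summable.of_norm
  refine Summable.of_nonneg_of_le (fun k => norm_nonneg _) (fun k => ?_)
    ((heat_sum_exp_sq 0 (by linarith : (0:ℝ) < σ/2)).congr fun k => by rw [pow_zero, one_mul])
  calc ‖(Complex.exp (-(((k:ℕ):ℂ)+1)^2 * ((σ:ℂ)/2)) *
        Complex.sin ((((k:ℕ):ℂ)+1) * (π:ℂ) * (x:ℂ))) • heatDelta k‖
      ≤ ‖Complex.exp (-(((k:ℕ):ℂ)+1)^2 * ((σ:ℂ)/2)) *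
        Complex.sin ((((k:ℕ):ℂ)+1) * (π:ℂ) * (x:ℂ))‖ := heat_norm_smul_delta_le _ _
  _ = Real.exp (-(((k:ℝ)+1)^2) * (σ/2)) * ‖Complex.sin ((((k:ℕ):ℂ)+1) * (π:ℂ) * (x:ℂ))‖ := by
        rw [norm_mul, heat_norm_E]
  _ ≤ Real.exp (-(((k:ℝ)+1)^2) * (σ/2)) * 1 := by
        have hb := heat_abs_csin ((((k:ℕ):ℂ)+1) * (π:ℂ) * (x:ℂ))
        rw [heat_im_arg] at hb
        simp only [Complex.ofReal_im, mul_zero, abs_zero, Real.exp_zero] at hb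
        exact mul_le_mul_of_nonneg_left hb (Real.exp_pos _).le
  _ = Real.exp (-(((k:ℝ)+1)^2) * (σ/2)) := mul_one _

private lemma heatV_analyticAt {σ : ℝ} (hσ : 0 < σ) (x₀ : ℝ) :
    AnalyticAt ℂ (heatV σ) (x₀:ℂ) := by
  set β : ℝ := σ/(4*π) with hβ
  have hβpos : 0 < β := by
    have := Real.pi_pos
    positivity
  set S : Set ℂ := {z : ℂ | -β < z.im} ∩ {z : ℂ | z.im < β} with hS
  have hopen : IsOpen S :=
    (isOpen_lt continuous_const Complex.continuous_im).inter
      (isOpen_lt Complex.continuous_im continuous_const)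
  have hpre : IsPreconnected S :=
    ((convex_halfSpace_im_gt (-β)).inter (convex_halfSpace_im_lt β)).isPreconnected
  have key : ∀ z ∈ S, HasDerivAt (heatV σ)
      (∑' k : ℕ, (Complex.exp (-(((k:ℕ):ℂ)+1)^2 * ((σ:ℂ)/2)) *
        (Complex.cos ((((k:ℕ):ℂ)+1) * (π:ℂ) * z) * ((((k:ℕ):ℂ)+1) * (π:ℂ)))) • heatDelta k) z := by
    intro z hz
    have := hasDerivAt_tsum_of_isPreconnected
      (u := fun k : ℕ => π * (((k:ℝ)+1) * Real.exp (-((k:ℝ)+1) * (σ/4))))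
      (g := fun k z => (Complex.exp (-(((k:ℕ):ℂ)+1)^2 * ((σ:ℂ)/2)) *
        Complex.sin ((((k:ℕ):ℂ)+1) * (π:ℂ) * z)) • heatDelta k)
      (g' := fun k z => (Complex.exp (-(((k:ℕ):ℂ)+1)^2 * ((σ:ℂ)/2)) *
        (Complex.cos ((((k:ℕ):ℂ)+1) * (π:ℂ) * z) * ((((k:ℕ):ℂ)+1) * (π:ℂ)))) • heatDelta k)
      (y₀ := ((0:ℝ):ℂ))
      (((heat_sum_exp_lin 1 (by linarith : (0:ℝ) < σ/4)).mul_left π).congr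
        fun k => by rw [pow_one])
      hopen hpre ?_ ?_ ?_ ?_ hz
    · exact this
    · intro k z' hz'
      have h1 : HasDerivAt (fun z : ℂ => (((k:ℕ):ℂ)+1) * (π:ℂ) * z)
          ((((k:ℕ):ℂ)+1) * (π:ℂ)) z' := by
        simpa using (hasDerivAt_id z').const_mul ((((k:ℕ):ℂ)+1) * (π:ℂ))
      exact (h1.csin.const_mul (Complex.exp (-(((k:ℕ):ℂ)+1)^2 * ((σ:ℂ)/2)))).smul_const
        (heatDelta k)
    · intro k z' hz'
      have hk1 : (1:ℝ) ≤ (k:ℝ)+1 := by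
        have : (0:ℝ) ≤ (k:ℝ) := Nat.cast_nonneg k
        linarith
      have hπ := Real.pi_pos
      have himz : |z'.im| ≤ β := by
        obtain ⟨h1, h2⟩ := hz'
        have h1' : -β < z'.im := h1
        have h2' : z'.im < β := h2
        rw [abs_le]
        exact ⟨h1'.le, h2'.le⟩
      have hcosb : ‖Complex.cos ((((k:ℕ):ℂ)+1) * (π:ℂ) * z')‖
          ≤ Real.exp ((((k:ℝ)+1) * π) * |z'.im|) := by
        have hb := heat_abs_ccos ((((k:ℕ):ℂ)+1) * (π:ℂ) * z')
        rw [heat_im_arg, abs_mul, abs_of_nonneg (by positivity : (0:ℝ) ≤ ((k:ℝ)+1) * π)] at hb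
        exact hb
      have hnc : ‖((((k:ℕ):ℂ)+1) * (π:ℂ) : ℂ)‖ = ((k:ℝ)+1) * π := by
        have h : ((((k:ℕ):ℂ)+1) * (π:ℂ) : ℂ) = (((((k:ℝ)+1) * π) : ℝ) : ℂ) := by push_cast; ring
        rw [h, Complex.norm_real, Real.norm_eq_abs, abs_of_nonneg (by positivity)]
      calc ‖(Complex.exp (-(((k:ℕ):ℂ)+1)^2 * ((σ:ℂ)/2)) *
            (Complex.cos ((((k:ℕ):ℂ)+1) * (π:ℂ) * z') * ((((k:ℕ):ℂ)+1) * (π:ℂ)))) • heatDelta k‖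
          ≤ ‖Complex.exp (-(((k:ℕ):ℂ)+1)^2 * ((σ:ℂ)/2)) *
            (Complex.cos ((((k:ℕ):ℂ)+1) * (π:ℂ) * z') * ((((k:ℕ):ℂ)+1) * (π:ℂ)))‖ :=
            heat_norm_smul_delta_le _ _
      _ = Real.exp (-(((k:ℝ)+1)^2) * (σ/2)) *
            (‖Complex.cos ((((k:ℕ):ℂ)+1) * (π:ℂ) * z')‖ * (((k:ℝ)+1) * π)) := by
            rw [norm_mul, norm_mul, heat_norm_E, hnc]
      _ ≤ Real.exp (-(((k:ℝ)+1)^2) * (σ/2)) *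
            (Real.exp ((((k:ℝ)+1) * π) * |z'.im|) * (((k:ℝ)+1) * π)) := by
            apply mul_le_mul_of_nonneg_left _ (Real.exp_pos _).le
            exact mul_le_mul_of_nonneg_right hcosb (by positivity)
      _ ≤ Real.exp (-((k:ℝ)+1) * (σ/4)) * (((k:ℝ)+1) * π) := by
            rw [← mul_assoc, ← Real.exp_add]
            apply mul_le_mul_of_nonneg_right _ (by positivity)
            apply Real.exp_le_exp.mpr
            have h1 : (((k:ℝ)+1) * π) * |z'.im| ≤ (((k:ℝ)+1) * π) * β :=
              mul_le_mul_of_nonneg_left himz (by positivity)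
            have h2 : (((k:ℝ)+1) * π) * β = ((k:ℝ)+1) * (σ/4) := by
              rw [hβ]; field_simp
            nlinarith [sq_nonneg ((k:ℝ)+1), mul_le_mul_of_nonneg_right
              (show ((k:ℝ)+1) ≤ ((k:ℝ)+1)^2 by nlinarith) (by linarith : (0:ℝ) ≤ σ/2)]
      _ = π * (((k:ℝ)+1) * Real.exp (-((k:ℝ)+1) * (σ/4))) := by ring
    · show ((0:ℝ):ℂ) ∈ S
      refine ⟨?_, ?_⟩ <;> simp only [Set.mem_setOf_eq, Complex.ofReal_im] <;> linarith
    · exact heatV_summable hσ 0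
  have hdiff : DifferentiableOn ℂ (heatV σ) S :=
    fun z hz => ((key z hz).differentiableAt).differentiableWithinAt
  refine (hdiff.analyticOnNhd hopen) _ ?_
  refine ⟨?_, ?_⟩ <;> simp only [Set.mem_setOf_eq, Complex.ofReal_im] <;> linarith
private lemma heat_analyticAt (A : ℕ → ℝ) (M : ℝ) (hA : ∀ k, |A k| ≤ M) (x₀ t₀ : ℝ)
    (ht₀ : 0 < t₀) :
    AnalyticAt ℝ (fun p : ℝ × ℝ => ∑' k : ℕ,
      A (k + 1) * Real.exp (-(((k : ℝ) + 1) ^ 2) * p.2) *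
        Real.sin (((k : ℝ) + 1) * π * p.1)) (x₀, t₀) := by
  set σ : ℝ := t₀/2 with hσdef
  set σ₂ : ℝ := t₀ * 3/4 with hσ₂def
  have hσ : 0 < σ := by simp only [hσdef]; linarith
  have hσσ₂ : σ < σ₂ := by simp only [hσdef, hσ₂def]; linarith
  have hσ₂t₀ : σ₂ < t₀ := by simp only [hσ₂def]; linarith
  set w : ℕ → ℝ := fun k => Real.exp (-(((k:ℝ)+1)^2) * (σ/2)) with hwdef
  have hw : ∀ k, 0 ≤ w k := fun k => (Real.exp_pos _).le
  have hsw : Summable w :=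
    (heat_sum_exp_sq 0 (by linarith : (0:ℝ) < σ/2)).congr fun k => by rw [pow_zero, one_mul]
  set Φ := heatPhi hw hsw with hΦdef
  -- analyticity of the complex function
  have hU : AnalyticAt ℂ (heatU A σ) ((t₀:ℝ):ℂ) :=
    heatU_analyticAt hA hσσ₂ (by simp only [Complex.ofReal_re]; linarith)
  have hV : AnalyticAt ℂ (heatV σ) ((x₀:ℝ):ℂ) := heatV_analyticAt hσ x₀
  have h1 : AnalyticAt ℂ (fun q : ℂ × ℂ => heatU A σ q.2) (((x₀:ℝ):ℂ), ((t₀:ℝ):ℂ)) := by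
    exact AnalyticAt.comp (f := fun q : ℂ × ℂ => q.2) (x := (((x₀:ℝ):ℂ), ((t₀:ℝ):ℂ))) hU analyticAt_snd
  have h2 : AnalyticAt ℂ (fun q : ℂ × ℂ => heatV σ q.1) (((x₀:ℝ):ℂ), ((t₀:ℝ):ℂ)) := by
    exact AnalyticAt.comp (f := fun q : ℂ × ℂ => q.1) (x := (((x₀:ℝ):ℂ), ((t₀:ℝ):ℂ))) hV analyticAt_fst
  have hG : AnalyticAt ℂ (fun q : ℂ × ℂ => Φ (heatU A σ q.2 * heatV σ q.1))
      (((x₀:ℝ):ℂ), ((t₀:ℝ):ℂ)) :=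
    (Φ.analyticAt _).comp (h1.mul h2)
  -- restrict scalars and compose with real inclusion
  have hι : AnalyticAt ℝ (fun p : ℝ × ℝ => (((p.1:ℝ):ℂ), ((p.2:ℝ):ℂ))) (x₀, t₀) :=
    (Complex.ofRealCLM.prodMap Complex.ofRealCLM).analyticAt _
  have hstep : AnalyticAt ℝ
      (fun p : ℝ × ℝ => Φ (heatU A σ ((p.2:ℝ):ℂ) * heatV σ ((p.1:ℝ):ℂ))) (x₀, t₀) := by
    exact AnalyticAt.comp (g := fun q : ℂ × ℂ => Φ (heatU A σ q.2 * heatV σ q.1))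
      (f := fun p : ℝ × ℝ => (((p.1:ℝ):ℂ), ((p.2:ℝ):ℂ))) hG.restrictScalars hι
  have hcomp : AnalyticAt ℝ
      (fun p : ℝ × ℝ => (Φ (heatU A σ ((p.2:ℝ):ℂ) * heatV σ ((p.1:ℝ):ℂ))).re) (x₀, t₀) := by
    exact AnalyticAt.comp
      (f := fun p : ℝ × ℝ => Φ (heatU A σ ((p.2:ℝ):ℂ) * heatV σ ((p.1:ℝ):ℂ)))
      (Complex.reCLM.analyticAt _) hstep
  refine hcomp.congr ?_
  have hset : {p : ℝ × ℝ | σ₂ < p.2} ∈ 𝓝 ((x₀, t₀) : ℝ × ℝ) :=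
    (isOpen_lt continuous_const continuous_snd).mem_nhds (by exact hσ₂t₀)
  filter_upwards [hset] with p hp
  have hp2 : σ₂ < p.2 := hp
  -- value computation
  have hsumU : Summable (fun k : ℕ =>
      ((A (k+1) : ℂ) * Complex.exp (-(((k:ℕ):ℂ)+1)^2 * (((p.2:ℝ):ℂ) - (σ:ℂ)))) • heatDelta k) :=
    heatU_summable hA (by simp only [Complex.ofReal_re]; linarith)
  have hsumV := heatV_summable hσ p.1
  have hUk : ∀ k, heatU A σ ((p.2:ℝ):ℂ) k
      = (A (k+1) : ℂ) * Complex.exp (-(((k:ℕ):ℂ)+1)^2 * (((p.2:ℝ):ℂ) - (σ:ℂ))) :=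
    fun k => heat_tsum_delta_apply _ hsumU k
  have hVk : ∀ k, heatV σ ((p.1:ℝ):ℂ) k
      = Complex.exp (-(((k:ℕ):ℂ)+1)^2 * ((σ:ℂ)/2)) *
        Complex.sin ((((k:ℕ):ℂ)+1) * (π:ℂ) * ((p.1:ℝ):ℂ)) :=
    fun k => heat_tsum_delta_apply _ hsumV k
  have hPhiS := heatPhi_summable hw hsw (heatU A σ ((p.2:ℝ):ℂ) * heatV σ ((p.1:ℝ):ℂ))
  have hre := Complex.reCLM.map_tsum hPhiS
  simp only [Complex.reCLM_apply] at hre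
  calc (Φ (heatU A σ ((p.2:ℝ):ℂ) * heatV σ ((p.1:ℝ):ℂ))).re
      = (∑' k, (w k : ℂ) * (heatU A σ ((p.2:ℝ):ℂ) * heatV σ ((p.1:ℝ):ℂ)) k).re := by
        rw [hΦdef, heatPhi_apply]
  _ = ∑' k, ((w k : ℂ) * (heatU A σ ((p.2:ℝ):ℂ) * heatV σ ((p.1:ℝ):ℂ)) k).re := hre
  _ = ∑' k, A (k + 1) * Real.exp (-(((k : ℝ) + 1) ^ 2) * p.2) *
        Real.sin (((k : ℝ) + 1) * π * p.1) := by
      refine tsum_congr fun k => ?_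
      rw [BoundedContinuousFunction.mul_apply, hUk k, hVk k]
      have e1 : (-(((k:ℕ):ℂ)+1)^2 * (((p.2:ℝ):ℂ) - (σ:ℂ)) : ℂ)
          = ((-(((k:ℝ)+1)^2) * (p.2 - σ) : ℝ) : ℂ) := by push_cast; ring
      have e2 : (-(((k:ℕ):ℂ)+1)^2 * ((σ:ℂ)/2) : ℂ)
          = ((-(((k:ℝ)+1)^2) * (σ/2) : ℝ) : ℂ) := by push_cast; ring
      have e3 : ((((k:ℕ):ℂ)+1) * (π:ℂ) * ((p.1:ℝ):ℂ) : ℂ)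
          = ((((k:ℝ)+1) * π * p.1 : ℝ) : ℂ) := by push_cast; ring
      rw [e1, e2, e3, ← Complex.ofReal_exp, ← Complex.ofReal_exp, ← Complex.ofReal_sin]
      have e4 : (w k : ℂ) * (((A (k+1) : ℝ):ℂ) * ((Real.exp (-(((k:ℝ)+1)^2) * (p.2 - σ)) : ℝ):ℂ)
          * (((Real.exp (-(((k:ℝ)+1)^2) * (σ/2)) : ℝ):ℂ) *
            ((Real.sin (((k:ℝ)+1) * π * p.1) : ℝ):ℂ)))
          = (((w k * (A (k+1) * Real.exp (-(((k:ℝ)+1)^2) * (p.2 - σ)) *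
            (Real.exp (-(((k:ℝ)+1)^2) * (σ/2)) * Real.sin (((k:ℝ)+1) * π * p.1))) : ℝ)) : ℂ) := by
        push_cast; ring
      rw [e4, Complex.ofReal_re]
      have hwk : w k = Real.exp (-(((k:ℝ)+1)^2) * (σ/2)) := rfl
      rw [hwk]
      have hexp : Real.exp (-(((k:ℝ)+1)^2) * (σ/2)) * Real.exp (-(((k:ℝ)+1)^2) * (p.2 - σ)) *
          Real.exp (-(((k:ℝ)+1)^2) * (σ/2)) = Real.exp (-(((k:ℝ)+1)^2) * p.2) := by
        rw [← Real.exp_add, ← Real.exp_add]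
        congr 1
        simp only [hσdef]
        ring
      linear_combination (A (k+1) * Real.sin (((k:ℝ)+1) * π * p.1)) * hexp
private lemma heat_abs_sin_le_one (θ : ℝ) : |Real.sin θ| ≤ 1 :=
  abs_le.mpr ⟨Real.neg_one_le_sin θ, Real.sin_le_one θ⟩

private lemma heat_abs_cos_le_one (θ : ℝ) : |Real.cos θ| ≤ 1 :=
  abs_le.mpr ⟨Real.neg_one_le_cos θ, Real.cos_le_one θ⟩

private lemma heat_exp_mono {k : ℕ} {a b : ℝ} (h : a ≤ b) :
    |Real.exp (-(((k:ℝ)+1)^2) * b)| ≤ Real.exp (-(((k:ℝ)+1)^2) * a) := by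
  rw [abs_of_pos (Real.exp_pos _)]
  apply Real.exp_le_exp.mpr
  nlinarith [sq_nonneg ((k:ℝ)+1)]

private lemma heat_term_bound2 {a e sn c M E : ℝ} (ha : |a| ≤ M) (he : |e| ≤ E)
    (hsn : |sn| ≤ 1) (hc : 0 ≤ c) : ‖a * e * (sn * c)‖ ≤ M * (E * c) := by
  have h1 : ‖a * e * sn‖ ≤ M * E := heat_term_bound ha he hsn
  rw [Real.norm_eq_abs] at h1 ⊢
  calc |a * e * (sn * c)| = |a * e * sn| * c := by
        rw [show a * e * (sn * c) = (a * e * sn) * c by ring, abs_mul, abs_of_nonneg hc]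
  _ ≤ (M * E) * c := mul_le_mul_of_nonneg_right h1 hc
  _ = M * (E * c) := by ring

private lemma heat_summable_at {A : ℕ → ℝ} {M : ℝ} (hA : ∀ k, |A k| ≤ M) (x : ℝ) {t : ℝ}
    (ht : 0 < t) :
    Summable (fun k : ℕ => A (k+1) * Real.exp (-(((k:ℝ)+1)^2) * t) *
      Real.sin (((k:ℝ)+1) * π * x)) := by
  apply Summable.of_norm
  refine Summable.of_nonneg_of_le (fun k => norm_nonneg _) (fun k => ?_)
    (((heat_sum_exp_sq 0 ht).mul_left M).congr fun k => by rw [pow_zero, one_mul])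
  exact heat_term_bound (hA _) (heat_exp_mono le_rfl) (heat_abs_sin_le_one _)

private lemma heat_hasDerivAt_t {A : ℕ → ℝ} {M : ℝ} (hA : ∀ k, |A k| ≤ M) (x : ℝ) {t : ℝ}
    (ht : 0 < t) :
    HasDerivAt (fun t' => ∑' k : ℕ, A (k+1) * Real.exp (-(((k:ℝ)+1)^2) * t') *
        Real.sin (((k:ℝ)+1) * π * x))
      (∑' k : ℕ, (-(((k:ℝ)+1)^2)) * (A (k+1) * Real.exp (-(((k:ℝ)+1)^2) * t) *
        Real.sin (((k:ℝ)+1) * π * x))) t := by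
  have hM : 0 ≤ M := (abs_nonneg _).trans (hA 0)
  refine hasDerivAt_tsum_of_isPreconnected
    (u := fun k : ℕ => M * (((k:ℝ)+1)^2 * Real.exp (-(((k:ℝ)+1)^2) * (t/2))))
    (g' := fun k t' => (-(((k:ℝ)+1)^2)) * (A (k+1) * Real.exp (-(((k:ℝ)+1)^2) * t') *
      Real.sin (((k:ℝ)+1) * π * x)))
    (y₀ := t)
    ((heat_sum_exp_sq 2 (by linarith : (0:ℝ) < t/2)).mul_left M)
    (isOpen_Ioi (a := t/2)) isPreconnected_Ioi ?_ ?_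
    (by simp only [Set.mem_Ioi]; linarith) ?_ (by simp only [Set.mem_Ioi]; linarith)
  · intro k t' _
    have h1 : HasDerivAt (fun t' : ℝ => -(((k:ℝ)+1)^2) * t') (-(((k:ℝ)+1)^2)) t' := by
      simpa using (hasDerivAt_id t').const_mul (-(((k:ℝ)+1)^2))
    have h2 := (h1.exp.const_mul (A (k+1))).mul_const (Real.sin (((k:ℝ)+1) * π * x))
    convert h2 using 1
    · rfl
    ring
  · intro k t' ht'
    have ht'2 : t/2 < t' := ht'
    have hb : ‖A (k+1) * Real.exp (-(((k:ℝ)+1)^2) * t') * Real.sin (((k:ℝ)+1) * π * x)‖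
        ≤ M * Real.exp (-(((k:ℝ)+1)^2) * (t/2)) :=
      heat_term_bound (hA _) (heat_exp_mono ht'2.le) (heat_abs_sin_le_one _)
    rw [Real.norm_eq_abs] at hb ⊢
    calc |(-(((k:ℝ)+1)^2)) * (A (k+1) * Real.exp (-(((k:ℝ)+1)^2) * t') *
          Real.sin (((k:ℝ)+1) * π * x))|
        = ((k:ℝ)+1)^2 * |A (k+1) * Real.exp (-(((k:ℝ)+1)^2) * t') *
          Real.sin (((k:ℝ)+1) * π * x)| := by
          rw [abs_mul, abs_neg, abs_of_nonneg (by positivity : (0:ℝ) ≤ ((k:ℝ)+1)^2)]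
    _ ≤ ((k:ℝ)+1)^2 * (M * Real.exp (-(((k:ℝ)+1)^2) * (t/2))) :=
          mul_le_mul_of_nonneg_left hb (by positivity)
    _ = M * (((k:ℝ)+1)^2 * Real.exp (-(((k:ℝ)+1)^2) * (t/2))) := by ring
  · exact heat_summable_at hA x ht

private lemma heat_hasDerivAt_x1 {A : ℕ → ℝ} {M : ℝ} (hA : ∀ k, |A k| ≤ M) {t : ℝ}
    (ht : 0 < t) (y : ℝ) :
    HasDerivAt (fun y => ∑' k : ℕ, A (k+1) * Real.exp (-(((k:ℝ)+1)^2) * t) *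
        Real.sin (((k:ℝ)+1) * π * y))
      (∑' k : ℕ, A (k+1) * Real.exp (-(((k:ℝ)+1)^2) * t) *
        (Real.cos (((k:ℝ)+1) * π * y) * (((k:ℝ)+1) * π))) y := by
  have hπ := Real.pi_pos
  refine hasDerivAt_tsum
    (u := fun k : ℕ => M * (Real.exp (-(((k:ℝ)+1)^2) * t) * (((k:ℝ)+1) * π)))
    (g' := fun k y => A (k+1) * Real.exp (-(((k:ℝ)+1)^2) * t) *
      (Real.cos (((k:ℝ)+1) * π * y) * (((k:ℝ)+1) * π)))
    (y₀ := 0)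
    (((heat_sum_exp_sq 1 ht).mul_left (M * π)).congr fun k => by rw [pow_one]; ring)
    ?_ ?_ ?_ y
  · intro k y'
    have h1 : HasDerivAt (fun y : ℝ => ((k:ℝ)+1) * π * y) (((k:ℝ)+1) * π) y' := by
      simpa using (hasDerivAt_id y').const_mul (((k:ℝ)+1) * π)
    exact h1.sin.const_mul (A (k+1) * Real.exp (-(((k:ℝ)+1)^2) * t))
  · intro k y'
    exact heat_term_bound2 (hA _) (heat_exp_mono le_rfl) (heat_abs_cos_le_one _)
      (by positivity)
  · exact heat_summable_at hA 0 ht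

private lemma heat_hasDerivAt_x2 {A : ℕ → ℝ} {M : ℝ} (hA : ∀ k, |A k| ≤ M) {t : ℝ}
    (ht : 0 < t) (y : ℝ) :
    HasDerivAt (fun y => ∑' k : ℕ, A (k+1) * Real.exp (-(((k:ℝ)+1)^2) * t) *
        (Real.cos (((k:ℝ)+1) * π * y) * (((k:ℝ)+1) * π)))
      (∑' k : ℕ, A (k+1) * Real.exp (-(((k:ℝ)+1)^2) * t) *
        (-Real.sin (((k:ℝ)+1) * π * y) * (((k:ℝ)+1) * π) * (((k:ℝ)+1) * π))) y := by
  have hπ := Real.pi_pos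
  have hM : 0 ≤ M := (abs_nonneg _).trans (hA 0)
  refine hasDerivAt_tsum
    (u := fun k : ℕ => M * (Real.exp (-(((k:ℝ)+1)^2) * t) * ((((k:ℝ)+1) * π) * (((k:ℝ)+1) * π))))
    (g' := fun k y => A (k+1) * Real.exp (-(((k:ℝ)+1)^2) * t) *
      (-Real.sin (((k:ℝ)+1) * π * y) * (((k:ℝ)+1) * π) * (((k:ℝ)+1) * π)))
    (y₀ := 0)
    (((heat_sum_exp_sq 2 ht).mul_left (M * (π * π))).congr fun k => by ring)
    ?_ ?_ ?_ y
  · intro k y'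
    have h1 : HasDerivAt (fun y : ℝ => ((k:ℝ)+1) * π * y) (((k:ℝ)+1) * π) y' := by
      simpa using (hasDerivAt_id y').const_mul (((k:ℝ)+1) * π)
    exact (h1.cos.mul_const (((k:ℝ)+1) * π)).const_mul
      (A (k+1) * Real.exp (-(((k:ℝ)+1)^2) * t))
  · intro k y'
    have heq : A (k+1) * Real.exp (-(((k:ℝ)+1)^2) * t) *
        (-Real.sin (((k:ℝ)+1) * π * y') * (((k:ℝ)+1) * π) * (((k:ℝ)+1) * π))
        = A (k+1) * Real.exp (-(((k:ℝ)+1)^2) * t) *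
        (-Real.sin (((k:ℝ)+1) * π * y') * ((((k:ℝ)+1) * π) * (((k:ℝ)+1) * π))) := by ring
    rw [heq]
    refine heat_term_bound2 (hA _) (heat_exp_mono le_rfl) ?_ (by positivity)
    rw [abs_neg]
    exact heat_abs_sin_le_one _
  · apply Summable.of_norm
    have hsum : Summable (fun k : ℕ => M * (Real.exp (-(((k:ℝ)+1)^2) * t) * (((k:ℝ)+1) * π))) :=
      ((heat_sum_exp_sq 1 ht).mul_left (M * π)).congr fun k => by rw [pow_one]; ring
    refine Summable.of_nonneg_of_le (fun k => norm_nonneg _) (fun k => ?_) hsum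
    exact heat_term_bound2 (hA _) (heat_exp_mono le_rfl) (heat_abs_cos_le_one _) (by positivity)
/-- Convergence and validity of the full sine-series heat solution
`s(x,t) = ∑_{k=1}^∞ A_k e^{-k²t} sin(kπx)` for a bounded coefficient
sequence: uniform convergence on `[0,1] × [δ,∞)` for each `δ > 0`, smoothness
on `(0,1) × (0,∞)`, the heat equation `∂s/∂t = (1/π²) ∂²s/∂x²` there, and
vanishing boundary values for `t > 0`. -/
theorem infinite_sine_series_heat_solution (A : ℕ → ℝ) (M : ℝ)
    (hA : ∀ k : ℕ, |A k| ≤ M)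
    (s : ℝ → ℝ → ℝ)
    (hs : ∀ x t : ℝ, s x t =
      ∑' k : ℕ, A (k + 1) * Real.exp (-(((k : ℝ) + 1) ^ 2) * t) *
        Real.sin (((k : ℝ) + 1) * π * x)) :
    (∀ δ : ℝ, 0 < δ →
      TendstoUniformlyOn
        (fun n (p : ℝ × ℝ) =>
          ∑ k ∈ Finset.range n,
            A (k + 1) * Real.exp (-(((k : ℝ) + 1) ^ 2) * p.2) *
              Real.sin (((k : ℝ) + 1) * π * p.1))
        (fun p : ℝ × ℝ => s p.1 p.2) atTop
        (Set.Icc 0 1 ×ˢ Set.Ici δ)) ∧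
    ContDiffOn ℝ (⊤ : ℕ∞) (fun p : ℝ × ℝ => s p.1 p.2) (Set.Ioo 0 1 ×ˢ Set.Ioi 0) ∧
    (∀ x ∈ Set.Ioo (0 : ℝ) 1, ∀ t ∈ Set.Ioi (0 : ℝ),
      deriv (fun t' => s x t') t =
        (1 / π ^ 2) * deriv (deriv fun y => s y t) x) ∧
    (∀ t ∈ Set.Ioi (0 : ℝ), s 0 t = 0 ∧ s 1 t = 0) := by
  refine ⟨?_, ?_, ?_, ?_⟩
  · -- Part 1 : uniform convergence
    intro δ hδ
    have hfun : (fun p : ℝ × ℝ => s p.1 p.2) = fun p : ℝ × ℝ =>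
        ∑' k : ℕ, A (k + 1) * Real.exp (-(((k : ℝ) + 1) ^ 2) * p.2) *
          Real.sin (((k : ℝ) + 1) * π * p.1) := funext fun p => hs p.1 p.2
    rw [hfun]
    refine tendstoUniformlyOn_tsum_nat
      (u := fun k : ℕ => M * Real.exp (-(((k:ℝ)+1)^2) * δ))
      (((heat_sum_exp_sq 0 hδ).mul_left M).congr fun k => by rw [pow_zero, one_mul])
      fun k p hp => ?_
    have hp2 : δ ≤ p.2 := hp.2
    exact heat_term_bound (hA _) (heat_exp_mono hp2) (heat_abs_sin_le_one _)
  · -- Part 2 : smoothness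
    have hAn : AnalyticOnNhd ℝ (fun p : ℝ × ℝ =>
        ∑' k : ℕ, A (k + 1) * Real.exp (-(((k : ℝ) + 1) ^ 2) * p.2) *
          Real.sin (((k : ℝ) + 1) * π * p.1)) (Set.Ioo 0 1 ×ˢ Set.Ioi 0) := by
      intro p hp
      have h := heat_analyticAt A M hA p.1 p.2 hp.2
      rwa [Prod.mk.eta] at h
    exact (hAn.contDiffOn ((isOpen_Ioo.prod isOpen_Ioi).uniqueDiffOn)).congr
      fun p _ => hs p.1 p.2
  · -- Part 3 : heat equation
    intro x _ t ht
    have ht0 : 0 < t := ht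
    have hfun1 : (fun t' => s x t') = fun t' =>
        ∑' k : ℕ, A (k + 1) * Real.exp (-(((k : ℝ) + 1) ^ 2) * t') *
          Real.sin (((k : ℝ) + 1) * π * x) := funext fun t' => hs x t'
    have hfun2 : (fun y => s y t) = fun y =>
        ∑' k : ℕ, A (k + 1) * Real.exp (-(((k : ℝ) + 1) ^ 2) * t) *
          Real.sin (((k : ℝ) + 1) * π * y) := funext fun y => hs y t
    rw [hfun1, hfun2, (heat_hasDerivAt_t hA x ht0).deriv]
    have hd1 : (deriv fun y => ∑' k : ℕ, A (k + 1) * Real.exp (-(((k : ℝ) + 1) ^ 2) * t) *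
        Real.sin (((k : ℝ) + 1) * π * y)) = fun y =>
        ∑' k : ℕ, A (k + 1) * Real.exp (-(((k:ℝ)+1)^2) * t) *
          (Real.cos (((k:ℝ)+1) * π * y) * (((k:ℝ)+1) * π)) :=
      funext fun y => (heat_hasDerivAt_x1 hA ht0 y).deriv
    rw [hd1, (heat_hasDerivAt_x2 hA ht0 x).deriv, ← tsum_mul_left]
    refine tsum_congr fun k => ?_
    have hπ : (π : ℝ) ≠ 0 := Real.pi_ne_zero
    field_simp
  · -- Part 4 : boundary values
    intro t _
    constructor
    · rw [hs 0 t]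
      simp
    · rw [hs 1 t]
      have hzero : ∀ k : ℕ, Real.sin (((k:ℝ)+1) * π) = 0 := by
        intro k
        have h : ((k:ℝ)+1) * π = ((k+1:ℕ):ℝ) * π := by push_cast; ring
        rw [h, Real.sin_nat_mul_pi]
      simp [hzero]
end
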